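/- Let C be a triangulated category and T a contravariantly finite rigid full subcategory, with weak equivalences W defined as morphisms whose connecting maps in a triangle factor through T^⊥. If a morphism p : X → Y has the right lifting property with respect to all morphisms in I (where I consists of morphisms T' → B with T' in T and B in T * ΣT), then p is a weak equivalence and has the right lifting property with respect to {0 → ΣT' : T' ∈ T}; conversely, every morphism that is both in J^□ (J = {0 → ΣT'}) and in W has the right lifting property with respect to all of I. -/

import Mathlib

open CategoryTheory CategoryTheory.Limits CategoryTheory.Pretriangulated

variable {C : Type*} [Category C] [Preadditive C] [HasZeroObject C]
  [HasShift C ℤ] [∀ n : ℤ, Functor.Additive (CategoryTheory.shiftFunctor C n)]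
  [Pretriangulated C]

/-- `f` factors through an object of the set `S`. -/
def FactorsThruSet (S : Set C) {X Y : C} (f : X ⟶ Y) : Prop :=
  ∃ U ∈ S, ∃ (a : X ⟶ U) (b : U ⟶ Y), f = a ≫ b

/-- The right perpendicular subcategory `T^⊥` of a full subcategory `T`. -/
def rperp (T : Set C) : Set C := {Z | ∀ T' ∈ T, ∀ (f : T' ⟶ Z), f = 0}

/-- The class `W` of morphisms whose connecting morphisms in any triangle factor
through `T^⊥`. -/
def Wclass (T : Set C) {X Y : C} (f : X ⟶ Y) : Prop :=
  ∀ (Z : C) (r : Z ⟶ X) (s : Y ⟶ Z⟦(1:ℤ)⟧),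
    (Triangle.mk r f s ∈ distTriang C) →
      FactorsThruSet (rperp T) r ∧ FactorsThruSet (rperp T) s

/-- A subcategory `T` is rigid if `C(T, ΣT) = 0`. -/
def IsRigid (T : Set C) : Prop :=
  ∀ T' ∈ T, ∀ T'' ∈ T, ∀ (f : T' ⟶ (T'' : C)⟦(1:ℤ)⟧), f = 0

/-- A subcategory is contravariantly finite if every object admits a right approximation. -/
def ContravariantlyFinite (T : Set C) : Prop :=
  ∀ X : C, ∃ T₀ ∈ T, ∃ (p : T₀ ⟶ X), ∀ T' ∈ T, ∀ (u : T' ⟶ X), ∃ v : T' ⟶ T₀, v ≫ p = u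

/-- The subcategory `T * ΣT` of cones of morphisms of `T`. -/
def TstarSigmaT (T : Set C) : Set C :=
  {A | ∃ T₁ ∈ T, ∃ T₀ ∈ T, ∃ (a : T₁ ⟶ (T₀ : C)) (b : (T₀ : C) ⟶ A)
    (c : A ⟶ (T₁ : C)⟦(1:ℤ)⟧), Triangle.mk a b c ∈ distTriang C}
open ZeroObject

/-- A subcategory is closed under direct summands. -/
def ClosedUnderSummands (T : Set C) : Prop :=
  ∀ (X S : C) (i : X ⟶ S) (r : S ⟶ X), i ≫ r = 𝟙 X → S ∈ T → X ∈ T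

/-- A subcategory is strictly full (closed under isomorphisms). -/
def ClosedUnderIso (T : Set C) : Prop :=
  ∀ X Y : C, (X ≅ Y) → X ∈ T → Y ∈ T

/-!
Complete `p` to a triangle `Z --r--> X --p--> Y --s--> ΣZ`. Then `p` lifts against `a : A ⟶ B`
as soon as `C(A, r) = 0` and `C(B, s) = 0`, and lifting against a zero map `A ⟶ B` forces both.
By rigidity the cone of a right `T`-approximation lies in `T^⊥`, so `p ∈ W` amounts to
`C(T, r) = 0 = C(T, s)`. Lifting against `J` adds `C(ΣT, s) = 0`, and the triangle
`T₁ → T₀ → B → ΣT₁` presenting `B ∈ T * ΣT` combines this with `C(T, r) = 0 = C(T, s)` into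
`C(B, s) = 0`.
-/

section Lifting

variable {D : Type*} [Category D] [HasZeroMorphisms D] {A B X Y : D} {p : X ⟶ Y}

lemma eq_zero_of_hasLiftingProperty_zero [HasLiftingProperty (0 : A ⟶ B) p]
    (f : A ⟶ X) (hf : f ≫ p = 0) : f = 0 :=
  ((CommSq.mk (by simp [hf]) : CommSq f (0 : A ⟶ B) p 0).fac_left).symm.trans zero_comp

lemma exists_lift_of_hasLiftingProperty_zero [HasLiftingProperty (0 : A ⟶ B) p]
    (g : B ⟶ Y) : ∃ l : B ⟶ X, l ≫ p = g :=
  let sq : CommSq (0 : A ⟶ X) (0 : A ⟶ B) p g := ⟨by simp⟩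
  ⟨sq.lift, sq.fac_right⟩

end Lifting

variable {T : Set C}

omit [HasShift C ℤ] [∀ n : ℤ, Functor.Additive (CategoryTheory.shiftFunctor C n)]
  [Pretriangulated C] in
lemma zero_mem_of_closedUnderSummands (hsumm : ClosedUnderSummands T) (hne : T.Nonempty) :
    (0 : C) ∈ T :=
  hne.elim fun S hS => hsumm 0 S 0 0 ((isZero_zero C).eq_of_src _ _) hS

lemma shift_mem_TstarSigmaT (h0 : (0 : C) ∈ T) {T' : C} (hT' : T' ∈ T) :
    T'⟦(1:ℤ)⟧ ∈ TstarSigmaT T :=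
  ⟨T', hT', 0, h0, 0, 0, 𝟙 _, contractible_distinguished₂ T'⟩

lemma mem_TstarSigmaT_of_mem (h0 : (0 : C) ∈ T) {T₀ : C} (hT₀ : T₀ ∈ T) :
    T₀ ∈ TstarSigmaT T :=
  ⟨0, h0, T₀, hT₀, 0, 𝟙 T₀, 0, contractible_distinguished₁ T₀⟩

omit [HasZeroObject C] [HasShift C ℤ]
  [∀ n : ℤ, Functor.Additive (CategoryTheory.shiftFunctor C n)] [Pretriangulated C] in
lemma FactorsThruSet.comp_eq_zero {X Y : C} {f : X ⟶ Y} (hf : FactorsThruSet (rperp T) f)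
    {T' : C} (hT' : T' ∈ T) (t : T' ⟶ X) : t ≫ f = 0 := by
  obtain ⟨U, hU, a, b, rfl⟩ := hf
  rw [← Category.assoc, hU T' hT' (t ≫ a), zero_comp]

lemma cone_mem_rperp_of_isRightApprox (hrig : IsRigid T)
    {M T₁ Z : C} (hT₁ : T₁ ∈ T) {t : T₁ ⟶ M} {q : M ⟶ Z} {e : Z ⟶ T₁⟦(1:ℤ)⟧}
    (hQ : Triangle.mk t q e ∈ distTriang C)
    (happ : ∀ T' ∈ T, ∀ u : T' ⟶ M, ∃ v : T' ⟶ T₁, v ≫ t = u) :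
    Z ∈ rperp T := by
  intro T' hT' φ
  obtain ⟨ψ, rfl⟩ := Triangle.coyoneda_exact₃ _ hQ φ (hrig T' hT' T₁ hT₁ _)
  obtain ⟨χ, rfl⟩ := happ T' hT' ψ
  have htq : t ≫ q = 0 := comp_distTriang_mor_zero₁₂ _ hQ
  change (χ ≫ t) ≫ q = 0
  rw [Category.assoc, htq, comp_zero]

lemma factorsThruSet_rperp_of_comp_eq_zero (hcf : ContravariantlyFinite T) (hrig : IsRigid T)
    {X Y : C} (f : X ⟶ Y) (hf : ∀ T' ∈ T, ∀ t : T' ⟶ X, t ≫ f = 0) :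
    FactorsThruSet (rperp T) f := by
  obtain ⟨T₁, hT₁, t, happ⟩ := hcf X
  obtain ⟨Z, q, e, hQ⟩ := distinguished_cocone_triangle t
  obtain ⟨f', hf'⟩ := Triangle.yoneda_exact₂ _ hQ f (hf T₁ hT₁ t)
  exact ⟨Z, cone_mem_rperp_of_isRightApprox hrig hT₁ hQ happ, q, f', hf'⟩

section Triangle

variable {Z X Y : C} {r : Z ⟶ X} {p : X ⟶ Y} {s : Y ⟶ Z⟦(1:ℤ)⟧}

lemma hasLiftingProperty_of_distTriang (hTri : Triangle.mk r p s ∈ distTriang C)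
    {A B : C} (a : A ⟶ B) (hr : ∀ e : A ⟶ Z, e ≫ r = 0) (hs : ∀ g : B ⟶ Y, g ≫ s = 0) :
    HasLiftingProperty a p := by
  refine ⟨fun {f g} sq => ?_⟩
  obtain ⟨h, hh⟩ : ∃ h : B ⟶ X, g = h ≫ p := Triangle.coyoneda_exact₃ _ hTri g (hs g)
  have hδ : (f - a ≫ h) ≫ p = 0 := by
    rw [Preadditive.sub_comp, Category.assoc, ← hh, sq.w, sub_self]
  obtain ⟨e, he⟩ := Triangle.coyoneda_exact₂ _ hTri _ hδ
  have hf : f = a ≫ h := sub_eq_zero.mp (he.trans (hr e))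
  exact CommSq.HasLift.mk' ⟨h, hf.symm, hh.symm⟩

lemma comp_mor₁_eq_zero_of_hasLiftingProperty_zero (hTri : Triangle.mk r p s ∈ distTriang C)
    {A B : C} [HasLiftingProperty (0 : A ⟶ B) p] (t : A ⟶ Z) : t ≫ r = 0 :=
  eq_zero_of_hasLiftingProperty_zero (B := B) (p := p) _ (by
    rw [Category.assoc]; exact (t ≫= comp_distTriang_mor_zero₁₂ _ hTri).trans comp_zero)

lemma comp_mor₃_eq_zero_of_hasLiftingProperty_zero (hTri : Triangle.mk r p s ∈ distTriang C)
    {A B : C} [HasLiftingProperty (0 : A ⟶ B) p] (t : B ⟶ Y) : t ≫ s = 0 := by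
  obtain ⟨l, rfl⟩ := exists_lift_of_hasLiftingProperty_zero (A := A) (p := p) t
  rw [Category.assoc]
  exact (l ≫= comp_distTriang_mor_zero₂₃ _ hTri).trans comp_zero

lemma comp_eq_zero_of_mem_TstarSigmaT (hTri : Triangle.mk r p s ∈ distTriang C)
    (hr : ∀ T' ∈ T, ∀ t : T' ⟶ Z, t ≫ r = 0) (hs : ∀ T' ∈ T, ∀ t : T' ⟶ Y, t ≫ s = 0)
    (hshift : ∀ T' ∈ T, ∀ t : T'⟦(1:ℤ)⟧ ⟶ Y, t ≫ s = 0)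
    {B : C} (hB : B ∈ TstarSigmaT T) (g : B ⟶ Y) : g ≫ s = 0 := by
  obtain ⟨T₁, hT₁, T₀, hT₀, b₁, b₀, b₂, hBtri⟩ := hB
  have hb₀ : b₀ ≫ g ≫ s = 0 := by simpa only [Category.assoc] using hs T₀ hT₀ (b₀ ≫ g)
  obtain ⟨c, hc⟩ : ∃ c : T₁⟦(1:ℤ)⟧ ⟶ Z⟦(1:ℤ)⟧, g ≫ s = b₂ ≫ c :=
    Triangle.yoneda_exact₃ _ hBtri _ hb₀
  obtain ⟨c', rfl⟩ := (shiftFunctor C (1:ℤ)).map_surjective c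
  have hc'r : c'⟦(1:ℤ)⟧' ≫ r⟦(1:ℤ)⟧' = 0 := by
    rw [← Functor.map_comp, hr T₁ hT₁ c', Functor.map_zero]
  obtain ⟨c'', hc''⟩ : ∃ c'' : T₁⟦(1:ℤ)⟧ ⟶ Y, c'⟦(1:ℤ)⟧' = c'' ≫ s :=
    Triangle.coyoneda_exact₁ _ hTri _ hc'r
  rw [hc, hc'', hshift T₁ hT₁ c'', comp_zero]

end Triangle

theorem Irlp_iff_Jrlp_and_weq_general (T : Set C)
    (hcf : ContravariantlyFinite T) (hrig : IsRigid T)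
    (hsumm : ClosedUnderSummands T)
    {X Y : C} (p : X ⟶ Y) :
    (∀ T' ∈ T, ∀ B ∈ TstarSigmaT T, ∀ (a : (T' : C) ⟶ (B : C)),
        HasLiftingProperty a p) ↔
      (Wclass T p ∧
        ∀ T' ∈ T, HasLiftingProperty (0 : (0 : C) ⟶ (T' : C)⟦(1:ℤ)⟧) p) := by
  obtain ⟨S, hS, -⟩ := hcf 0
  have h0 : (0 : C) ∈ T := zero_mem_of_closedUnderSummands hsumm ⟨S, hS⟩
  constructor
  · intro H
    refine ⟨fun Z r s hTri => ⟨?_, ?_⟩, fun T' hT' => H 0 h0 _ (shift_mem_TstarSigmaT h0 hT') 0⟩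
    · refine factorsThruSet_rperp_of_comp_eq_zero hcf hrig r fun T' hT' t => ?_
      have := H T' hT' _ (shift_mem_TstarSigmaT h0 hT') 0
      exact comp_mor₁_eq_zero_of_hasLiftingProperty_zero hTri (B := T'⟦(1:ℤ)⟧) t
    · refine factorsThruSet_rperp_of_comp_eq_zero hcf hrig s fun T' hT' t => ?_
      have := H 0 h0 _ (mem_TstarSigmaT_of_mem h0 hT') 0
      exact comp_mor₃_eq_zero_of_hasLiftingProperty_zero hTri (A := 0) t
  · rintro ⟨hW, hJ⟩ T' hT' B hB a
    obtain ⟨Z, r, s, hTri⟩ : ∃ (Z : C) (r : Z ⟶ X) (s : Y ⟶ Z⟦(1:ℤ)⟧),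
        Triangle.mk r p s ∈ distTriang C := by
      obtain ⟨Q, w, δ, hQ⟩ := distinguished_cocone_triangle p
      exact ⟨_, _, _, inv_rot_of_distTriang _ hQ⟩
    obtain ⟨hr, hs⟩ := hW _ _ _ hTri
    have hshift : ∀ T'' ∈ T, ∀ t : T''⟦(1:ℤ)⟧ ⟶ Y, t ≫ s = 0 := fun T'' hT'' t =>
      have := hJ T'' hT''
      comp_mor₃_eq_zero_of_hasLiftingProperty_zero hTri (A := 0) t
    exact hasLiftingProperty_of_distTriang hTri a (hr.comp_eq_zero hT')
      (comp_eq_zero_of_mem_TstarSigmaT hTri (fun _ => hr.comp_eq_zero)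
        (fun _ => hs.comp_eq_zero) hshift hB)

/-- `I^□ = J^□ ∩ W`: a morphism has the right lifting property with respect to all
morphisms `T' ⟶ B` (`T' ∈ T`, `B ∈ T * ΣT`) if and only if it is a weak equivalence
having the right lifting property with respect to all `0 ⟶ ΣT'` (`T' ∈ T`). -/
theorem Irlp_iff_Jrlp_and_weq (T : Set C)
    (hcf : ContravariantlyFinite T) (hrig : IsRigid T)
    (hiso : ClosedUnderIso T) (hsumm : ClosedUnderSummands T)
    {X Y : C} (p : X ⟶ Y) :
    (∀ T' ∈ T, ∀ B ∈ TstarSigmaT T, ∀ (a : (T' : C) ⟶ (B : C)),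
        HasLiftingProperty a p) ↔
      (Wclass T p ∧
        ∀ T' ∈ T, HasLiftingProperty (0 : (0 : C) ⟶ (T' : C)⟦(1:ℤ)⟧) p) :=
  Irlp_iff_Jrlp_and_weq_general T hcf hrig hsumm p
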